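/- Let d ≥ n ≥ k ≥ 1, let Φ_n := |Φ_n⟩⟨Φ_n| be a Slater determinant state of n fermions in ℂ^d, and let C_{k→n} and P_{n→k} be the antisymmetric cloning machine and antisymmetrized partial trace, respectively. Then D(Φ_n ‖ (C_{k→n}∘P_{n→k})(Φ_n)) ≤ log C(d−k, d−n), and moreover log C(d−k, d−n) = −log( C(d,k) / (C(n,k)·C(d,n)) ). -/

import Mathlib

open scoped BigOperators Matrix Kronecker ComplexOrder
open Matrix

noncomputable section

variable {ι : Type*} [Fintype ι] [DecidableEq ι]

/-- Apply a real-scalar function to a Hermitian matrix via the spectral decomposition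
(junk value `0` on non-Hermitian matrices). -/
def hermFun (f : ℝ → ℂ) (A : Matrix ι ι ℂ) : Matrix ι ι ℂ :=
  if hA : A.IsHermitian then
    (hA.eigenvectorUnitary : Matrix ι ι ℂ) * Matrix.diagonal (fun i => f (hA.eigenvalues i)) *
      (star (hA.eigenvectorUnitary : Matrix ι ι ℂ))
  else 0

/-- Matrix logarithm (on the support; natural logarithm). -/
def matLog (A : Matrix ι ι ℂ) : Matrix ι ι ℂ := hermFun (fun x => (Real.log x : ℂ)) A

/-- Matrix square root of a Hermitian (e.g. positive semidefinite) matrix. -/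
def matSqrt (A : Matrix ι ι ℂ) : Matrix ι ι ℂ := hermFun (fun x => (Real.sqrt x : ℂ)) A

/-- Complex matrix power with the Moore–Penrose convention (inverse powers taken on the support). -/
def matCPow (A : Matrix ι ι ℂ) (z : ℂ) : Matrix ι ι ℂ :=
  hermFun (fun x => if x = 0 then 0 else (x : ℂ) ^ z) A

/-- A state (density operator). -/
def IsState (ρ : Matrix ι ι ℂ) : Prop := ρ.PosSemidef ∧ ρ.trace = 1

/-- Quantum relative entropy `D(ρ‖σ) = tr[ρ (log ρ - log σ)]`. -/
def relEnt (ρ σ : Matrix ι ι ℂ) : ℝ := ((ρ * (matLog ρ - matLog σ)).trace).re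

/-- von Neumann entropy `H(ρ) = -tr[ρ log ρ]`. -/
def vnEntropy (ρ : Matrix ι ι ℂ) : ℝ := -((ρ * matLog ρ).trace).re

/-- Trace norm `‖X‖₁ = tr √(X† X)`. -/
def traceNorm (X : Matrix ι ι ℂ) : ℝ := ((matSqrt (Xᴴ * X)).trace).re

/-- Fidelity `F(ρ,σ) = ‖√ρ √σ‖₁²`. -/
def fidelity (ρ σ : Matrix ι ι ℂ) : ℝ := (traceNorm (matSqrt ρ * matSqrt σ)) ^ 2

variable {A B : Type*} [Fintype A] [DecidableEq A] [Fintype B] [DecidableEq B]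

/-- The extension `Λ ⊗ id_m` of a map on matrices. -/
def extendChan (Λ : Matrix A A ℂ →ₗ[ℂ] Matrix B B ℂ) {m : Type*} [Fintype m]
    (M : Matrix (A × m) (A × m) ℂ) : Matrix (B × m) (B × m) ℂ :=
  fun p q => Λ (fun a a' => M (a, p.2) (a', q.2)) p.1 q.1

/-- A quantum channel: a completely positive trace-preserving linear map. -/
structure IsQChannel (Λ : Matrix A A ℂ →ₗ[ℂ] Matrix B B ℂ) : Prop where
  tp : ∀ M, (Λ M).trace = M.trace
  cp : ∀ (m : ℕ) (M : Matrix (A × Fin m) (A × Fin m) ℂ), M.PosSemidef →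
    (extendChan Λ M).PosSemidef

/-- The marginal of a state of `n` systems on the `j`-th system. -/
def marginal {n : ℕ} (ρ : Matrix (Fin n → ι) (Fin n → ι) ℂ) (j : Fin n) :
    Matrix ι ι ℂ :=
  fun a b => ∑ f : {i : Fin n // i ≠ j} → ι,
      ρ (fun i => if h : i = j then a else f ⟨i, h⟩)
        (fun i => if h : i = j then b else f ⟨i, h⟩)

/-- `n`-fold tensor power of a matrix. -/
def tpow (σ : Matrix ι ι ℂ) (n : ℕ) : Matrix (Fin n → ι) (Fin n → ι) ℂ :=
  fun f g => ∏ i, σ (f i) (g i)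

/-- Partial trace over the last `n - k` tensor factors. -/
def ptraceLast {n k : ℕ} (h : k ≤ n) (ρ : Matrix (Fin n → ι) (Fin n → ι) ℂ) :
    Matrix (Fin k → ι) (Fin k → ι) ℂ :=
  fun a b => ∑ z : Fin (n - k) → ι,
    ρ (fun i => if h' : (i : ℕ) < k then a ⟨i, h'⟩ else z ⟨(i : ℕ) - k, by have := i.isLt; omega⟩)
      (fun i => if h' : (i : ℕ) < k then b ⟨i, h'⟩ else z ⟨(i : ℕ) - k, by have := i.isLt; omega⟩)

/-- Permutation matrix acting on `(ℂ^d)^{⊗ n}`. -/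
def permMat (d n : ℕ) (π : Equiv.Perm (Fin n)) :
    Matrix (Fin n → Fin d) (Fin n → Fin d) ℂ :=
  fun f g => if g = f ∘ π then 1 else 0

/-- Orthogonal projection onto the symmetric subspace of `(ℂ^d)^{⊗ n}`. -/
def symProj (d n : ℕ) : Matrix (Fin n → Fin d) (Fin n → Fin d) ℂ :=
  ((n.factorial : ℂ))⁻¹ • ∑ π : Equiv.Perm (Fin n), permMat d n π

/-- Dimension `d[n] = C(d+n-1, n)` of the symmetric subspace. -/
def dsym (d n : ℕ) : ℕ := (d + n - 1).choose n

/-- Maximally mixed state on the symmetric subspace. -/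
def piSym (d n : ℕ) : Matrix (Fin n → Fin d) (Fin n → Fin d) ℂ :=
  ((dsym d n : ℂ))⁻¹ • symProj d n

/-- Tensoring a matrix on the first `k` factors with the identity on the last `n-k` factors. -/
def extendId {d k n : ℕ} (h : k ≤ n) (M : Matrix (Fin k → Fin d) (Fin k → Fin d) ℂ) :
    Matrix (Fin n → Fin d) (Fin n → Fin d) ℂ :=
  fun f g => (if ∀ i : Fin n, k ≤ (i : ℕ) → f i = g i then 1 else 0) *
    M (fun i => f (Fin.castLE h i)) (fun i => g (Fin.castLE h i))

/-- The universal quantum cloning machine `C_{k→n}`. -/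
def uqcm (d : ℕ) {k n : ℕ} (h : k ≤ n) (ω : Matrix (Fin k → Fin d) (Fin k → Fin d) ℂ) :
    Matrix (Fin n → Fin d) (Fin n → Fin d) ℂ :=
  (((dsym d k : ℂ)) / ((dsym d n : ℂ))) •
    (symProj d n * extendId h (symProj d k * ω * symProj d k) * symProj d n)

/-- The symmetrized partial trace channel `P_{n→k}`. -/
def symPTrace (d : ℕ) {k n : ℕ} (h : k ≤ n) (ω : Matrix (Fin n → Fin d) (Fin n → Fin d) ℂ) :
    Matrix (Fin k → Fin d) (Fin k → Fin d) ℂ :=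
  symProj d k * ptraceLast h (symProj d n * ω * symProj d n) * symProj d k

/-- Orthogonal projection onto the antisymmetric subspace of `(ℂ^d)^{⊗ n}`. -/
def antiProj (d n : ℕ) : Matrix (Fin n → Fin d) (Fin n → Fin d) ℂ :=
  ((n.factorial : ℂ))⁻¹ • ∑ π : Equiv.Perm (Fin n), ((Equiv.Perm.sign π : ℤ) : ℂ) • permMat d n π

/-- Maximally mixed state on the antisymmetric subspace. -/
def piAnti (d n : ℕ) : Matrix (Fin n → Fin d) (Fin n → Fin d) ℂ :=
  ((d.choose n : ℂ))⁻¹ • antiProj d n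

/-- The antisymmetric cloning machine. -/
def antiClone (d : ℕ) {k n : ℕ} (h : k ≤ n) (ω : Matrix (Fin k → Fin d) (Fin k → Fin d) ℂ) :
    Matrix (Fin n → Fin d) (Fin n → Fin d) ℂ :=
  (((d.choose k : ℂ)) / ((d.choose n : ℂ))) •
    (antiProj d n * extendId h (antiProj d k * ω * antiProj d k) * antiProj d n)

/-- The antisymmetrized partial trace. -/
def antiPTrace (d : ℕ) {k n : ℕ} (h : k ≤ n) (ω : Matrix (Fin n → Fin d) (Fin n → Fin d) ℂ) :
    Matrix (Fin k → Fin d) (Fin k → Fin d) ℂ :=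
  antiProj d k * ptraceLast h (antiProj d n * ω * antiProj d n) * antiProj d k

/-- Rank-one projection (outer product) `|v⟩⟨v|`. -/
def outer {α : Type*} (v : α → ℂ) : Matrix α α ℂ :=
  fun x y => v x * (starRingEnd ℂ) (v y)

/-- Slater determinant vector `φ₁ ∧ ⋯ ∧ φ_k`. -/
def slater {d k : ℕ} (w : Fin k → (Fin d → ℂ)) : (Fin k → Fin d) → ℂ :=
  fun f => ((Real.sqrt k.factorial : ℂ))⁻¹ *
    ∑ π : Equiv.Perm (Fin k), ((Equiv.Perm.sign π : ℤ) : ℂ) * ∏ i, w (π i) (f i)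

/-- Partial trace over the second tensor factor. -/
def trB {ιA ιB : Type*} [Fintype ιB] (ρ : Matrix (ιA × ιB) (ιA × ιB) ℂ) : Matrix ιA ιA ℂ :=
  fun a a' => ∑ b, ρ (a, b) (a', b)

/-- Partial trace over the first tensor factor. -/
def trA {ιA ιB : Type*} [Fintype ιA] (ρ : Matrix (ιA × ιB) (ιA × ιB) ℂ) : Matrix ιB ιB ℂ :=
  fun b b' => ∑ a, ρ (a, b) (a, b')

/-- The probability density `β(t) = (π/2)(1 + cosh(π t))⁻¹`. -/
def betaDens (t : ℝ) : ℝ := (Real.pi / 2) * (1 + Real.cosh (Real.pi * t))⁻¹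

/-- Rotated Petz recovery map `R^t_{A,X}`, mapping operators on `B` to operators on `A ⊗ B`. -/
def petzA {ιA ιB : Type*} [Fintype ιA] [DecidableEq ιA] [Fintype ιB] [DecidableEq ιB]
    (t : ℝ) (X : Matrix (ιA × ιB) (ιA × ιB) ℂ) (Y : Matrix ιB ιB ℂ) :
    Matrix (ιA × ιB) (ιA × ιB) ℂ :=
  matCPow X ((1 + t * Complex.I) / 2) *
    ((1 : Matrix ιA ιA ℂ) ⊗ₖ
      (matCPow (trA X) (-(1 + t * Complex.I) / 2) * Y * matCPow (trA X) (-(1 - t * Complex.I) / 2))) *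
    matCPow X ((1 - t * Complex.I) / 2)

/-- Rotated Petz recovery map `R^t_{B,X}`, mapping operators on `A` to operators on `A ⊗ B`. -/
def petzB {ιA ιB : Type*} [Fintype ιA] [DecidableEq ιA] [Fintype ιB] [DecidableEq ιB]
    (t : ℝ) (X : Matrix (ιA × ιB) (ιA × ιB) ℂ) (Y : Matrix ιA ιA ℂ) :
    Matrix (ιA × ιB) (ιA × ιB) ℂ :=
  matCPow X ((1 + t * Complex.I) / 2) *
    ((matCPow (trB X) (-(1 + t * Complex.I) / 2) * Y * matCPow (trB X) (-(1 - t * Complex.I) / 2)) ⊗ₖ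
      (1 : Matrix ιB ιB ℂ)) *
    matCPow X ((1 - t * Complex.I) / 2)

/-- Cloning map between two general subspaces, given by their orthogonal projections. -/
def genClone {d k n : ℕ} (h : k ≤ n) (dX dY : ℕ)
    (PX : Matrix (Fin n → Fin d) (Fin n → Fin d) ℂ)
    (PY : Matrix (Fin k → Fin d) (Fin k → Fin d) ℂ)
    (ω : Matrix (Fin k → Fin d) (Fin k → Fin d) ℂ) :
    Matrix (Fin n → Fin d) (Fin n → Fin d) ℂ :=
  (((dY : ℂ)) / ((dX : ℂ))) • (PX * extendId h (PY * ω * PY) * PX)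

/-- Partial trace channel between two general subspaces. -/
def genPTrace {d k n : ℕ} (h : k ≤ n)
    (PX : Matrix (Fin n → Fin d) (Fin n → Fin d) ℂ)
    (PY : Matrix (Fin k → Fin d) (Fin k → Fin d) ℂ)
    (ω : Matrix (Fin n → Fin d) (Fin n → Fin d) ℂ) :
    Matrix (Fin k → Fin d) (Fin k → Fin d) ℂ :=
  PY * ptraceLast h (PX * ω * PX) * PY

end

/-!
Cut the Slater determinant `Φ` between the first `k` and the last `n - k` particles and reshape
it into a matrix `K`, so that `tr_{n-k} |Φ⟩⟨Φ| = K K†`. Expanding `Φ` over permutations, the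
orthonormality of the `φᵢ` turns `K K† K` into a triple sum over `S_n` which the substitution
`π = ρα`, `τ = ρβ` (with `α ∈ S_k`, `β ∈ S_{n-k}`) collapses to `C(n,k)⁻¹ K`: all Schmidt
coefficients of a Slater determinant across the cut are equal. Hence
`(tr_{n-k} |Φ⟩⟨Φ| ⊗ I) Φ = C(n,k)⁻¹ Φ`, and since every antisymmetrizer fixes `Φ` and its
partial trace, `Φ` is an eigenvector of `σ = (C_{k→n} ∘ P_{n→k})(Φ)` with eigenvalue
`C(d,k) / (C(n,k) C(d,n)) = C(d-k,d-n)⁻¹`. For a pure state this gives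
`D(Φ‖σ) = -log C(d-k,d-n)⁻¹`, so the bound holds with equality.
-/

open Equiv

lemma outer_eq_vecMulVec {α : Type*} (v : α → ℂ) : outer v = vecMulVec v (star v) := rfl

lemma outer_isHermitian {α : Type*} (v : α → ℂ) : (outer v).IsHermitian := by
  rw [outer_eq_vecMulVec, IsHermitian, conjTranspose_vecMulVec, star_star]

section OuterProduct

variable {α : Type*} [Fintype α]

lemma trace_outer_mul (v : α → ℂ) (X : Matrix α α ℂ) :
    (outer v * X).trace = star v ⬝ᵥ (X *ᵥ v) := by
  rw [outer_eq_vecMulVec, vecMulVec_mul, trace_vecMulVec, dotProduct_mulVec, dotProduct_comm]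

lemma outer_mulVec_self {v : α → ℂ} (hv : star v ⬝ᵥ v = 1) : outer v *ᵥ v = v := by
  rw [outer_eq_vecMulVec, vecMulVec_mulVec, hv, MulOpposite.op_one, one_smul]

lemma mul_outer_mul_conjTranspose {β : Type*} [Fintype β] (A : Matrix β α ℂ) (v : α → ℂ) :
    A * outer v * Aᴴ = outer (A *ᵥ v) := by
  rw [outer_eq_vecMulVec, outer_eq_vecMulVec, mul_vecMulVec, vecMulVec_mul, star_mulVec]

end OuterProduct

section FunctionalCalculus

variable {α : Type*} [Fintype α] [DecidableEq α]

lemma hermFun_mulVec_of_mulVec_eq_smul {A : Matrix α α ℂ} (hA : A.IsHermitian) (f : ℝ → ℂ)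
    {v : α → ℂ} {μ : ℝ} (hv : A *ᵥ v = (μ : ℂ) • v) : hermFun f A *ᵥ v = f μ • v := by
  set U : Matrix α α ℂ := (hA.eigenvectorUnitary : Matrix α α ℂ)
  have hUU : U * star U = 1 := Unitary.mul_star_self_of_mem hA.eigenvectorUnitary.2
  have hdiag : star U * A = diagonal (RCLike.ofReal ∘ hA.eigenvalues) * star U := by
    have h := hA.conjStarAlgAut_star_eigenvectorUnitary
    rw [Unitary.conjStarAlgAut_star_apply] at h
    rw [← h, Matrix.mul_assoc, hUU, Matrix.mul_one]
  -- in the eigenbasis, `v` has no component outside the eigenvalue `μ`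
  have heig : ∀ i, (hA.eigenvalues i : ℂ) * (star U *ᵥ v) i = μ * (star U *ᵥ v) i := by
    have h : diagonal (RCLike.ofReal ∘ hA.eigenvalues) *ᵥ (star U *ᵥ v)
        = (μ : ℂ) • (star U *ᵥ v) := by
      rw [mulVec_mulVec, ← hdiag, ← mulVec_mulVec, hv, mulVec_smul]
    intro i
    simpa [mulVec_diagonal] using congrFun h i
  have hfdiag : diagonal (fun i => f (hA.eigenvalues i)) *ᵥ (star U *ᵥ v)
      = f μ • (star U *ᵥ v) := by
    ext i
    rw [mulVec_diagonal, Pi.smul_apply, smul_eq_mul]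
    by_cases hi : (star U *ᵥ v) i = 0
    · rw [hi, mul_zero, mul_zero]
    · rw [show hA.eigenvalues i = μ by exact_mod_cast mul_right_cancel₀ hi (heig i)]
  rw [hermFun, dif_pos hA, ← mulVec_mulVec, ← mulVec_mulVec, hfdiag, mulVec_smul, mulVec_mulVec,
    hUU, one_mulVec]

lemma relEnt_outer_eq_neg_log {v : α → ℂ} (hv : star v ⬝ᵥ v = 1) {σ : Matrix α α ℂ}
    (hσ : σ.IsHermitian) {μ : ℝ} (hσv : σ *ᵥ v = (μ : ℂ) • v) :
    relEnt (outer v) σ = -Real.log μ := by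
  have hρv : outer v *ᵥ v = ((1 : ℝ) : ℂ) • v := by
    rw [outer_mulVec_self hv, Complex.ofReal_one, one_smul]
  rw [relEnt, trace_outer_mul, sub_mulVec, matLog, matLog,
    hermFun_mulVec_of_mulVec_eq_smul (outer_isHermitian v) _ hρv,
    hermFun_mulVec_of_mulVec_eq_smul hσ _ hσv, ← sub_smul, dotProduct_smul, hv]
  simp

end FunctionalCalculus

section Antisymmetrizer

variable {d m : ℕ}

lemma intCast_sign_mul_self (π : Perm (Fin m)) :
    ((Perm.sign π : ℤ) : ℂ) * ((Perm.sign π : ℤ) : ℂ) = 1 := by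
  rw [← Int.cast_mul, ← Units.val_mul, Int.units_mul_self, Units.val_one, Int.cast_one]

lemma permMat_mulVec (π : Perm (Fin m)) (u : (Fin m → Fin d) → ℂ) :
    permMat d m π *ᵥ u = fun a => u (a ∘ π) := by
  ext a
  simp [permMat, mulVec, dotProduct]

lemma permMat_conjTranspose (π : Perm (Fin m)) : (permMat d m π)ᴴ = permMat d m π⁻¹ := by
  ext a b
  simp only [conjTranspose_apply, permMat, apply_ite star, star_one, star_zero, Perm.coe_inv,
    Equiv.eq_comp_symm, eq_comm]

lemma antiProj_isHermitian : (antiProj d m).IsHermitian := by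
  rw [IsHermitian, antiProj, conjTranspose_smul, conjTranspose_sum]
  simp only [conjTranspose_smul, permMat_conjTranspose, star_inv₀, star_natCast, star_intCast]
  congr 1
  exact Fintype.sum_equiv (Equiv.inv _) _ _ fun π => by simp

lemma antiProj_mulVec_of_antisymm {u : (Fin m → Fin d) → ℂ}
    (hu : ∀ (π : Perm (Fin m)) a, u (a ∘ π) = (Perm.sign π : ℤ) * u a) :
    antiProj d m *ᵥ u = u := by
  ext a
  simp only [antiProj, smul_mulVec, sum_mulVec, permMat_mulVec, hu, Pi.smul_apply,
    Finset.sum_apply, smul_eq_mul, ← mul_assoc, intCast_sign_mul_self, one_mul,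
    Finset.sum_const, Finset.card_univ, Fintype.card_perm, Fintype.card_fin, nsmul_eq_mul]
  field_simp

lemma antiProj_mul_of_antisymm {β : Type*} {K : Matrix (Fin m → Fin d) β ℂ}
    (hK : ∀ (π : Perm (Fin m)) a z, K (a ∘ π) z = (Perm.sign π : ℤ) * K a z) :
    antiProj d m * K = K := by
  ext a z
  exact congrFun (antiProj_mulVec_of_antisymm (u := fun a => K a z) fun π a => hK π a z) a

end Antisymmetrizer

section YoungSubgroup

variable {α M : Type*} [Fintype α] [DecidableEq α] [AddCommMonoid M] [Module ℂ M]

lemma card_perm_fixing_compl (p : α → Prop) [DecidablePred p] :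
    (Finset.univ.filter fun a : Perm α => ∀ x, ¬ p x → a x = x).card
      = (Fintype.card {x // p x}).factorial := by
  rw [← Fintype.card_subtype, ← Fintype.card_congr (Perm.subtypeEquivSubtypePerm p),
    Fintype.card_perm]

lemma sign_triple_smul_eq_of_fixing (p : α → Prop) (F : Perm α → Perm α → M)
    (hF : ∀ π π' τ τ', (∀ x, p x → π x = π' x) → (∀ x, ¬ p x → τ x = τ' x) → F π τ = F π' τ')
    {ρ a b : Perm α} (ha : ∀ x, ¬ p x → a x = x) (hb : ∀ x, p x → b x = x) :
    ((Perm.sign (ρ * a) * Perm.sign ρ * Perm.sign (ρ * b) : ℤˣ) : ℂ) • F (ρ * a) (ρ * b)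
      = ((Perm.sign (ρ * a * b) : ℤ) : ℂ) • F (ρ * a * b) (ρ * a * b) := by
  have hbp : ∀ x, ¬ p x → ¬ p (b x) := fun x hx hbx => hx (b.injective (hb _ hbx) ▸ hbx)
  congr 1
  · simp only [Perm.sign_mul]
    rcases Int.units_eq_one_or (Perm.sign ρ) with h | h <;> simp [h]
  · exact hF _ _ _ _ (fun x hx => by simp [hb x hx]) (fun x hx => by simp [ha _ (hbp x hx)])

/-- Substituting `π = ρ * a` and `τ = ρ * b` with `a` supported in `{p}` and `b` in `{¬ p}`, each
summand becomes the `σ = ρ * a * b` term of the right-hand sum. -/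
lemma sum_perm_triple_young (p : α → Prop) [DecidablePred p] (F : Perm α → Perm α → M)
    (hF : ∀ π π' τ τ', (∀ x, p x → π x = π' x) → (∀ x, ¬ p x → τ x = τ' x) → F π τ = F π' τ') :
    ∑ π : Perm α, ∑ ρ : Perm α, ∑ τ : Perm α,
      (if (∀ x, ¬ p x → π x = ρ x) ∧ (∀ x, p x → ρ x = τ x) then
        ((Perm.sign π * Perm.sign ρ * Perm.sign τ : ℤˣ) : ℂ) else 0) • F π τ
      = (((Fintype.card {x // p x}).factorial * (Fintype.card {x // ¬ p x}).factorial : ℕ) : ℂ) •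
          ∑ σ : Perm α, ((Perm.sign σ : ℤ) : ℂ) • F σ σ := by
  set S := ∑ σ : Perm α, ((Perm.sign σ : ℤ) : ℂ) • F σ σ
  have hB : (Finset.univ.filter fun b : Perm α => ∀ x, p x → b x = x).card
      = (Fintype.card {x // ¬ p x}).factorial := by
    simpa only [not_not] using card_perm_fixing_compl fun x => ¬ p x
  calc _ = ∑ ρ : Perm α, ∑ a : Perm α, ∑ b : Perm α,
          (if (∀ x, ¬ p x → a x = x) ∧ (∀ x, p x → b x = x) then
            ((Perm.sign (ρ * a) * Perm.sign ρ * Perm.sign (ρ * b) : ℤˣ) : ℂ) else 0) •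
              F (ρ * a) (ρ * b) := by
        rw [Finset.sum_comm]
        refine Finset.sum_congr rfl fun ρ _ => ?_
        rw [← Equiv.sum_comp (Equiv.mulLeft ρ)]
        refine Finset.sum_congr rfl fun a _ => ?_
        rw [← Equiv.sum_comp (Equiv.mulLeft ρ)]
        refine Finset.sum_congr rfl fun b _ => ?_
        simp [Perm.mul_apply, eq_comm]
    _ = ∑ a : Perm α, ∑ b : Perm α,
          if (∀ x, ¬ p x → a x = x) ∧ (∀ x, p x → b x = x) then S else 0 := by
        rw [Finset.sum_comm]
        refine Finset.sum_congr rfl fun a _ => ?_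
        rw [Finset.sum_comm]
        refine Finset.sum_congr rfl fun b _ => ?_
        split_ifs with hab
        · rw [Finset.sum_congr rfl fun ρ _ => sign_triple_smul_eq_of_fixing p F hF hab.1 hab.2]
          exact Fintype.sum_equiv (Equiv.mulRight (a * b)) _ _ fun ρ => by simp [mul_assoc]
        · simp
    _ = _ := by
        simp only [ite_and, Finset.sum_ite_irrel, Finset.sum_const_zero]
        simp only [← Finset.sum_filter, Finset.sum_const, card_perm_fixing_compl, hB, smul_smul,
          ← Nat.cast_smul_eq_nsmul ℂ, Nat.cast_mul]

end YoungSubgroup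

def tensorVec {κ ι : Type*} [Fintype κ] (ψ : κ → ι → ℂ) : (κ → ι) → ℂ :=
  fun f => ∏ i, ψ i (f i)

lemma star_tensorVec_dotProduct {κ ι : Type*} [Fintype κ] [DecidableEq κ] [Fintype ι]
    (ψ χ : κ → ι → ℂ) : star (tensorVec ψ) ⬝ᵥ tensorVec χ = ∏ i, star (ψ i) ⬝ᵥ χ i := by
  simp only [dotProduct, tensorVec, Pi.star_apply, Fintype.prod_sum, star_prod,
    ← Finset.prod_mul_distrib]

lemma inv_sqrt_natCast_mul_self (m : ℕ) :
    ((Real.sqrt m : ℂ))⁻¹ * ((Real.sqrt m : ℂ))⁻¹ = (m : ℂ)⁻¹ := by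
  rw [← mul_inv, ← Complex.ofReal_mul, Real.mul_self_sqrt m.cast_nonneg, Complex.ofReal_natCast]

section Slater

variable {d n : ℕ} {φ : Fin n → Fin d → ℂ}

lemma star_tensorVec_comp_dotProduct {κ : Type*} [Fintype κ] [DecidableEq κ]
    (hφ : ∀ i j, star (φ i) ⬝ᵥ φ j = if i = j then 1 else 0) (u w : κ → Fin n) :
    star (tensorVec (φ ∘ u)) ⬝ᵥ tensorVec (φ ∘ w) = if u = w then 1 else 0 := by
  simp only [star_tensorVec_dotProduct, Function.comp_apply, hφ, Finset.prod_boole,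
    Finset.mem_univ, true_implies, funext_iff]

lemma slater_eq_sum (φ : Fin n → Fin d → ℂ) :
    slater φ = ((Real.sqrt n.factorial : ℂ))⁻¹ •
      ∑ π : Perm (Fin n), ((Perm.sign π : ℤ) : ℂ) • tensorVec (φ ∘ π) := by
  ext f
  simp [slater, tensorVec, Finset.sum_apply]

lemma tensorVec_comp_perm (φ : Fin n → Fin d → ℂ) (σ π : Perm (Fin n)) (f : Fin n → Fin d) :
    tensorVec (φ ∘ σ) (f ∘ π) = tensorVec (φ ∘ (σ * π⁻¹)) f := by
  simp only [tensorVec, Function.comp_apply]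
  exact Fintype.prod_equiv π _ _ fun i => by simp

lemma slater_comp_perm (φ : Fin n → Fin d → ℂ) (π : Perm (Fin n)) (f : Fin n → Fin d) :
    slater φ (f ∘ π) = (Perm.sign π : ℤ) * slater φ f := by
  simp only [slater_eq_sum, Pi.smul_apply, Finset.sum_apply, smul_eq_mul, tensorVec_comp_perm,
    Finset.mul_sum]
  refine Fintype.sum_equiv (Equiv.mulRight π⁻¹) _ _ fun σ => ?_
  simp only [coe_mulRight, Perm.sign_mul, Perm.sign_inv, Units.val_mul, Int.cast_mul]
  linear_combination -((Real.sqrt n.factorial : ℂ)⁻¹ * ((Perm.sign σ : ℤ) : ℂ) *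
    tensorVec (φ ∘ ⇑(σ * π⁻¹)) f) * intCast_sign_mul_self π

lemma star_slater_dotProduct_tensorVec
    (hφ : ∀ i j, star (φ i) ⬝ᵥ φ j = if i = j then 1 else 0) (π : Perm (Fin n)) :
    star (slater φ) ⬝ᵥ tensorVec (φ ∘ π) = (Real.sqrt n.factorial : ℂ)⁻¹ * (Perm.sign π : ℤ) := by
  rw [slater_eq_sum, star_smul, smul_dotProduct, star_sum, sum_dotProduct]
  simp only [star_smul, smul_dotProduct, star_tensorVec_comp_dotProduct hφ, DFunLike.coe_fn_eq,
    star_intCast, star_inv₀, Complex.star_def, Complex.conj_ofReal, smul_eq_mul, mul_ite, mul_one,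
    mul_zero, Finset.sum_ite_eq', Finset.mem_univ, if_true]

lemma star_slater_dotProduct_self (hφ : ∀ i j, star (φ i) ⬝ᵥ φ j = if i = j then 1 else 0) :
    star (slater φ) ⬝ᵥ slater φ = 1 := by
  nth_rewrite 2 [slater_eq_sum]
  simp only [dotProduct_smul, dotProduct_sum, star_slater_dotProduct_tensorVec hφ, smul_eq_mul]
  rw [Finset.sum_congr rfl fun π _ => by rw [mul_left_comm, intCast_sign_mul_self, mul_one],
    Finset.sum_const, Finset.card_univ, Fintype.card_perm, Fintype.card_fin, nsmul_eq_mul,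
    mul_left_comm, inv_sqrt_natCast_mul_self, mul_inv_cancel₀ (by positivity)]

end Slater

section Cut

variable {k n : ℕ} {ι β : Type*}

def splitEquiv (h : k ≤ n) : Fin k ⊕ Fin (n - k) ≃ Fin n :=
  finSumFinEquiv.trans (finCongr (Nat.add_sub_cancel' h))

lemma splitEquiv_inl (h : k ≤ n) (i : Fin k) : splitEquiv h (Sum.inl i) = Fin.castLE h i :=
  rfl

lemma splitEquiv_inr_val (h : k ≤ n) (j : Fin (n - k)) :
    (splitEquiv h (Sum.inr j) : ℕ) = k + j :=
  rfl

lemma comp_splitEquiv_inl_eq_iff (h : k ≤ n) (f g : Fin n → β) :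
    f ∘ splitEquiv h ∘ Sum.inl = g ∘ splitEquiv h ∘ Sum.inl ↔
      ∀ x : Fin n, (x : ℕ) < k → f x = g x := by
  rw [← (splitEquiv h).forall_congr_right]
  simp [Sum.forall, funext_iff, splitEquiv_inl, splitEquiv_inr_val]

lemma comp_splitEquiv_inr_eq_iff (h : k ≤ n) (f g : Fin n → β) :
    f ∘ splitEquiv h ∘ Sum.inr = g ∘ splitEquiv h ∘ Sum.inr ↔
      ∀ x : Fin n, ¬ (x : ℕ) < k → f x = g x := by
  rw [← (splitEquiv h).forall_congr_right]
  simp [Sum.forall, funext_iff, splitEquiv_inl, splitEquiv_inr_val]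

def joinEquiv (h : k ≤ n) : (Fin k → ι) × (Fin (n - k) → ι) ≃ (Fin n → ι) :=
  (sumArrowEquivProdArrow _ _ _).symm.trans ((splitEquiv h).arrowCongr (Equiv.refl ι))

/-- The indexing used in `ptraceLast`. -/
lemma joinEquiv_apply (h : k ≤ n) (a : Fin k → ι) (z : Fin (n - k) → ι) :
    joinEquiv h (a, z) = fun i : Fin n =>
      if h' : (i : ℕ) < k then a ⟨i, h'⟩ else z ⟨i - k, by have := i.isLt; omega⟩ := by
  ext i
  change Sum.elim a z ((splitEquiv h).symm i) = _
  split_ifs with h'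
  · rw [(splitEquiv h).symm_apply_eq.2 (Fin.ext rfl : i = splitEquiv h (Sum.inl ⟨i, h'⟩))]
    rfl
  · have hi : i = splitEquiv h (Sum.inr ⟨i - k, by have := i.isLt; omega⟩) := by
      ext
      simp only [splitEquiv_inr_val]
      omega
    rw [(splitEquiv h).symm_apply_eq.2 hi]
    rfl

lemma joinEquiv_splitEquiv (h : k ≤ n) (a : Fin k → ι) (z : Fin (n - k) → ι)
    (s : Fin k ⊕ Fin (n - k)) : joinEquiv h (a, z) (splitEquiv h s) = Sum.elim a z s :=
  congrArg (Sum.elim a z) ((splitEquiv h).symm_apply_apply s)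

lemma joinEquiv_comp_perm (h : k ≤ n) (a : Fin k → ι) (z : Fin (n - k) → ι) (τ : Perm (Fin k)) :
    joinEquiv h (a ∘ τ, z) = joinEquiv h (a, z) ∘ (splitEquiv h).permCongr (Perm.sumCongr τ 1) := by
  ext i
  obtain ⟨s, rfl⟩ := (splitEquiv h).surjective i
  rcases s with i | j <;> simp [joinEquiv_splitEquiv, permCongr_apply]

def reshape (h : k ≤ n) (v : (Fin n → ι) → ℂ) : Matrix (Fin k → ι) (Fin (n - k) → ι) ℂ :=
  fun a z => v (joinEquiv h (a, z))

lemma ptraceLast_outer [Fintype ι] [DecidableEq ι] (h : k ≤ n) (v : (Fin n → ι) → ℂ) :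
    ptraceLast h (outer v) = reshape h v * (reshape h v)ᴴ := by
  ext a b
  simp only [ptraceLast, outer, reshape, mul_apply, conjTranspose_apply, joinEquiv_apply]
  rfl

lemma reshape_comp_perm_of_antisymm (h : k ≤ n) {v : (Fin n → ι) → ℂ}
    (hv : ∀ (π : Perm (Fin n)) f, v (f ∘ π) = (Perm.sign π : ℤ) * v f)
    (τ : Perm (Fin k)) (a : Fin k → ι) (z : Fin (n - k) → ι) :
    reshape h v (a ∘ τ) z = (Perm.sign τ : ℤ) * reshape h v a z := by
  simp [reshape, joinEquiv_comp_perm, hv, Perm.sign_permCongr, Perm.sign_sumCongr]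

lemma reshape_tensorVec (h : k ≤ n) (ψ : Fin n → ι → ℂ) :
    reshape h (tensorVec ψ) = vecMulVec (tensorVec (ψ ∘ splitEquiv h ∘ Sum.inl))
      (tensorVec (ψ ∘ splitEquiv h ∘ Sum.inr)) := by
  ext a z
  simp only [reshape, tensorVec, vecMulVec_apply, ← (splitEquiv h).prod_comp,
    Fintype.prod_sum_type, joinEquiv_splitEquiv, Function.comp_apply, Sum.elim_inl, Sum.elim_inr]

variable {d : ℕ}

lemma extendId_conjTranspose (h : k ≤ n) (M : Matrix (Fin k → Fin d) (Fin k → Fin d) ℂ) :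
    (extendId h M)ᴴ = extendId h Mᴴ := by
  ext f g
  simp only [extendId, conjTranspose_apply, star_mul', apply_ite star, star_one, star_zero]
  congr 1
  exact if_congr (forall_congr' fun i => imp_congr_right fun _ => eq_comm) rfl rfl

lemma extendId_joinEquiv (h : k ≤ n) (M : Matrix (Fin k → Fin d) (Fin k → Fin d) ℂ)
    (a b : Fin k → Fin d) (y z : Fin (n - k) → Fin d) :
    extendId h M (joinEquiv h (a, y)) (joinEquiv h (b, z)) = if y = z then M a b else 0 := by
  have hhead : ∀ (c : Fin k → Fin d) (w : Fin (n - k) → Fin d),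
      (fun i => joinEquiv h (c, w) (Fin.castLE h i)) = c := fun c w => by
    ext i
    rw [← splitEquiv_inl, joinEquiv_splitEquiv]
    rfl
  have htail : (∀ i : Fin n, k ≤ (i : ℕ) → joinEquiv h (a, y) i = joinEquiv h (b, z) i) ↔
      y = z := by
    rw [← (splitEquiv h).forall_congr_right]
    simp [Sum.forall, joinEquiv_splitEquiv, funext_iff, splitEquiv_inl, splitEquiv_inr_val]
  rw [extendId, hhead, hhead, if_congr htail rfl rfl, ite_mul, one_mul, zero_mul]

lemma extendId_mulVec_joinEquiv (h : k ≤ n) (M : Matrix (Fin k → Fin d) (Fin k → Fin d) ℂ)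
    (v : (Fin n → Fin d) → ℂ) (a : Fin k → Fin d) (y : Fin (n - k) → Fin d) :
    (extendId h M *ᵥ v) (joinEquiv h (a, y)) = (M * reshape h v) a y := by
  simp [mulVec, dotProduct, ← (joinEquiv h).sum_comp, Fintype.sum_prod_type, extendId_joinEquiv,
    mul_apply, reshape]

end Cut

lemma vecMulVec_mul_conjTranspose_mul_vecMulVec {l m o q : Type*} [Fintype m] [Fintype o]
    (u : l → ℂ) (v : m → ℂ) (w : o → ℂ) (x : m → ℂ) (y : o → ℂ) (z : q → ℂ) :
    vecMulVec u v * (vecMulVec w x)ᴴ * vecMulVec y z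
      = ((v ⬝ᵥ star x) * (star w ⬝ᵥ y)) • vecMulVec u z := by
  rw [conjTranspose_vecMulVec, vecMulVec_mul_vecMulVec, vecMulVec_mul_vecMulVec, smul_dotProduct,
    vecMulVec_smul, smul_eq_mul]

section Schmidt

variable {d k n : ℕ} (h : k ≤ n) (φ : Fin n → Fin d → ℂ)

def headTensor (π : Perm (Fin n)) : (Fin k → Fin d) → ℂ :=
  tensorVec (φ ∘ π ∘ splitEquiv h ∘ Sum.inl)

def tailTensor (π : Perm (Fin n)) : (Fin (n - k) → Fin d) → ℂ :=
  tensorVec (φ ∘ π ∘ splitEquiv h ∘ Sum.inr)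

lemma reshape_slater :
    reshape h (slater φ) = ((Real.sqrt n.factorial : ℂ))⁻¹ • ∑ π : Perm (Fin n),
      ((Perm.sign π : ℤ) : ℂ) • vecMulVec (headTensor h φ π) (tailTensor h φ π) := by
  ext a z
  simp only [reshape, slater_eq_sum, Pi.smul_apply, Finset.sum_apply, Matrix.smul_apply,
    Matrix.sum_apply]
  congr 1
  refine Finset.sum_congr rfl fun π _ => ?_
  exact congrArg _ (congrFun (congrFun (reshape_tensorVec h (φ ∘ π)) a) z)

lemma star_headTensor_dotProduct (hφ : ∀ i j, star (φ i) ⬝ᵥ φ j = if i = j then 1 else 0)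
    (ρ τ : Perm (Fin n)) : star (headTensor h φ ρ) ⬝ᵥ headTensor h φ τ =
      if ∀ x : Fin n, (x : ℕ) < k → ρ x = τ x then 1 else 0 := by
  simp only [headTensor, star_tensorVec_comp_dotProduct hφ, comp_splitEquiv_inl_eq_iff]

lemma tailTensor_dotProduct_star (hφ : ∀ i j, star (φ i) ⬝ᵥ φ j = if i = j then 1 else 0)
    (π ρ : Perm (Fin n)) : tailTensor h φ π ⬝ᵥ star (tailTensor h φ ρ) =
      if ∀ x : Fin n, ¬ (x : ℕ) < k → π x = ρ x then 1 else 0 := by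
  simp only [tailTensor, dotProduct_comm (tensorVec _), star_tensorVec_comp_dotProduct hφ,
    comp_splitEquiv_inr_eq_iff, eq_comm]

lemma reshape_slater_mul_conjTranspose_mul_eq_sum
    (hφ : ∀ i j, star (φ i) ⬝ᵥ φ j = if i = j then 1 else 0) :
    reshape h (slater φ) * (reshape h (slater φ))ᴴ * reshape h (slater φ)
      = ((Real.sqrt n.factorial : ℂ))⁻¹ ^ 3 • ∑ π : Perm (Fin n), ∑ ρ : Perm (Fin n),
        ∑ τ : Perm (Fin n),
          (if (∀ x : Fin n, ¬ (x : ℕ) < k → π x = ρ x) ∧ (∀ x : Fin n, (x : ℕ) < k → ρ x = τ x)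
            then ((Perm.sign π * Perm.sign ρ * Perm.sign τ : ℤˣ) : ℂ) else 0) •
              vecMulVec (headTensor h φ π) (tailTensor h φ τ) := by
  have hc : star ((Real.sqrt n.factorial : ℂ))⁻¹ = ((Real.sqrt n.factorial : ℂ))⁻¹ := by
    rw [star_inv₀, Complex.star_def, Complex.conj_ofReal]
  rw [reshape_slater]
  simp only [conjTranspose_smul, conjTranspose_sum, Matrix.sum_mul, Matrix.mul_sum,
    Matrix.smul_mul, Matrix.mul_smul, vecMulVec_mul_conjTranspose_mul_vecMulVec,
    tailTensor_dotProduct_star h φ hφ, star_headTensor_dotProduct h φ hφ, ite_zero_mul_ite_zero,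
    mul_one, smul_smul,
    Finset.smul_sum, star_mul', hc, star_intCast]
  conv_lhs =>
    rw [Finset.sum_comm]
    enter [2, ρ]
    rw [Finset.sum_comm]
  rw [Finset.sum_comm]
  refine Finset.sum_congr rfl fun π _ => Finset.sum_congr rfl fun ρ _ =>
    Finset.sum_congr rfl fun τ _ => ?_
  congr 1
  split_ifs <;> push_cast <;> ring

lemma reshape_slater_mul_conjTranspose_mul
    (hφ : ∀ i j, star (φ i) ⬝ᵥ φ j = if i = j then 1 else 0) :
    reshape h (slater φ) * (reshape h (slater φ))ᴴ * reshape h (slater φ)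
      = ((n.choose k : ℂ))⁻¹ • reshape h (slater φ) := by
  have hF : ∀ π π' τ τ' : Perm (Fin n), (∀ x : Fin n, (x : ℕ) < k → π x = π' x) →
      (∀ x : Fin n, ¬ (x : ℕ) < k → τ x = τ' x) →
        vecMulVec (headTensor h φ π) (tailTensor h φ τ)
          = vecMulVec (headTensor h φ π') (tailTensor h φ τ') := fun π π' τ τ' hπ hτ => by
    simp only [headTensor, tailTensor, (comp_splitEquiv_inl_eq_iff h π π').2 hπ,
      (comp_splitEquiv_inr_eq_iff h τ τ').2 hτ]
  have hyoung := sum_perm_triple_young (fun x : Fin n => (x : ℕ) < k) _ hF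
  rw [Fintype.card_subtype_compl, Fintype.card_fin_lt_of_le h, Fintype.card_fin] at hyoung
  have hcc : ((Real.sqrt n.factorial : ℂ))⁻¹ * ((Real.sqrt n.factorial : ℂ))⁻¹
      = ((n.factorial : ℂ))⁻¹ := inv_sqrt_natCast_mul_self _
  have hfact : ((n.choose k : ℕ) : ℂ) * k.factorial * (n - k).factorial = n.factorial := by
    exact_mod_cast Nat.choose_mul_factorial_mul_factorial h
  rw [reshape_slater_mul_conjTranspose_mul_eq_sum h φ hφ]
  convert congrArg (((Real.sqrt n.factorial : ℂ))⁻¹ ^ 3 • ·) hyoung using 1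
  · congr! 7
  rw [reshape_slater, smul_smul, smul_smul]
  congr 1
  rw [pow_succ, sq, hcc, ← hfact]
  push_cast
  field_simp

end Schmidt

section Cloning

variable {d k n : ℕ} (h : k ≤ n) (φ : Fin n → Fin d → ℂ)

lemma antiProj_mul_reshape_slater : antiProj d k * reshape h (slater φ) = reshape h (slater φ) :=
  antiProj_mul_of_antisymm (reshape_comp_perm_of_antisymm h (slater_comp_perm φ))

lemma antiProj_mul_ptraceLast_outer_slater_mul_antiProj :
    antiProj d k * ptraceLast h (outer (slater φ)) * antiProj d k
      = ptraceLast h (outer (slater φ)) := by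
  rw [ptraceLast_outer, ← Matrix.mul_assoc, antiProj_mul_reshape_slater, Matrix.mul_assoc,
    ← antiProj_isHermitian.eq, ← conjTranspose_mul, antiProj_mul_reshape_slater]

lemma antiPTrace_outer_slater :
    antiPTrace d h (outer (slater φ)) = ptraceLast h (outer (slater φ)) := by
  have hΦ : antiProj d n * outer (slater φ) * antiProj d n = outer (slater φ) := by
    simpa [antiProj_isHermitian.eq, antiProj_mulVec_of_antisymm (slater_comp_perm φ)] using
      mul_outer_mul_conjTranspose (antiProj d n) (slater φ)
  rw [antiPTrace, hΦ, antiProj_mul_ptraceLast_outer_slater_mul_antiProj]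

lemma antiClone_ptraceLast_outer_slater :
    antiClone d h (ptraceLast h (outer (slater φ))) = ((d.choose k : ℂ) / (d.choose n : ℂ)) •
      (antiProj d n * extendId h (ptraceLast h (outer (slater φ))) * antiProj d n) := by
  rw [antiClone, antiProj_mul_ptraceLast_outer_slater_mul_antiProj]

lemma extendId_ptraceLast_outer_slater_mulVec
    (hφ : ∀ i j, star (φ i) ⬝ᵥ φ j = if i = j then 1 else 0) :
    extendId h (ptraceLast h (outer (slater φ))) *ᵥ slater φ = ((n.choose k : ℂ))⁻¹ • slater φ := by
  ext f
  obtain ⟨⟨a, y⟩, rfl⟩ := (joinEquiv h).surjective f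
  rw [extendId_mulVec_joinEquiv, ptraceLast_outer, reshape_slater_mul_conjTranspose_mul h φ hφ]
  rfl

lemma antiClone_antiPTrace_outer_slater_isHermitian :
    (antiClone d h (antiPTrace d h (outer (slater φ)))).IsHermitian := by
  have hE : (extendId h (ptraceLast h (outer (slater φ)))).IsHermitian := by
    rw [IsHermitian, extendId_conjTranspose, ptraceLast_outer,
      (isHermitian_mul_conjTranspose_self _).eq]
  rw [antiPTrace_outer_slater, antiClone_ptraceLast_outer_slater]
  refine IsHermitian.smul ?_ ?_
  · simpa [antiProj_isHermitian.eq] using isHermitian_conjTranspose_mul_mul (antiProj d n) hE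
  · simp [IsSelfAdjoint, star_div₀]

lemma antiClone_antiPTrace_outer_slater_mulVec
    (hφ : ∀ i j, star (φ i) ⬝ᵥ φ j = if i = j then 1 else 0) :
    antiClone d h (antiPTrace d h (outer (slater φ))) *ᵥ slater φ
      = (((d.choose k : ℝ) / (n.choose k * d.choose n) : ℝ) : ℂ) • slater φ := by
  have hΦ : antiProj d n *ᵥ slater φ = slater φ := antiProj_mulVec_of_antisymm (slater_comp_perm φ)
  rw [antiPTrace_outer_slater, antiClone_ptraceLast_outer_slater, smul_mulVec, ← mulVec_mulVec,
    ← mulVec_mulVec, hΦ, extendId_ptraceLast_outer_slater_mulVec h φ hφ, mulVec_smul, hΦ,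
    smul_smul]
  congr 1
  push_cast
  ring

end Cloning

lemma choose_div_choose_mul_choose {d k n : ℕ} (hkn : k ≤ n) (hnd : n ≤ d) :
    (d.choose k : ℝ) / (n.choose k * d.choose n) = ((d - k).choose (d - n) : ℝ)⁻¹ := by
  have hmul : d.choose n * n.choose k = d.choose k * (d - k).choose (d - n) := by
    rw [Nat.choose_mul hkn, Nat.choose_symm_of_eq_add (by omega : d - k = n - k + (d - n))]
  have hpos : (0 : ℝ) < (d - k).choose (d - n) := by exact_mod_cast Nat.choose_pos (by omega)
  have hdn : (0 : ℝ) < d.choose n := by exact_mod_cast Nat.choose_pos hnd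
  have hnk : (0 : ℝ) < n.choose k := by exact_mod_cast Nat.choose_pos hkn
  rw [div_eq_iff (by positivity), eq_comm, inv_mul_eq_div, div_eq_iff hpos.ne']
  exact_mod_cast (mul_comm _ _).trans hmul

theorem antisym_cloning_relEnt_bound_general
    (d k n : ℕ) (hkn : k ≤ n) (hnd : n ≤ d)
    (φ : Fin n → (Fin d → ℂ))
    (hφ : ∀ i j, (∑ a, (starRingEnd ℂ) (φ i a) * φ j a) = if i = j then 1 else 0) :
    relEnt (outer (slater φ))
        (antiClone d hkn (antiPTrace d hkn (outer (slater φ)))) ≤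
      Real.log (((d - k).choose (d - n) : ℝ)) ∧
    Real.log (((d - k).choose (d - n) : ℝ)) =
      -Real.log ((d.choose k : ℝ) / ((n.choose k : ℝ) * (d.choose n : ℝ))) := by
  have hrel := relEnt_outer_eq_neg_log (star_slater_dotProduct_self hφ)
    (antiClone_antiPTrace_outer_slater_isHermitian hkn φ)
    (antiClone_antiPTrace_outer_slater_mulVec hkn φ hφ)
  have hlog : -Real.log ((d.choose k : ℝ) / ((n.choose k : ℝ) * (d.choose n : ℝ)))
      = Real.log (((d - k).choose (d - n) : ℝ)) := by
    rw [choose_div_choose_mul_choose hkn hnd, Real.log_inv, neg_neg]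
  exact ⟨(hrel.trans hlog).le, hlog.symm⟩

/-- Relative entropy bound for the antisymmetric cloning machine recovering a Slater
determinant from the loss of `n−k` fermionic particles. -/
theorem antisym_cloning_relEnt_bound
    (d k n : ℕ) (hk : 1 ≤ k) (hkn : k ≤ n) (hnd : n ≤ d)
    (φ : Fin n → (Fin d → ℂ))
    (hφ : ∀ i j, (∑ a, (starRingEnd ℂ) (φ i a) * φ j a) = if i = j then 1 else 0) :
    relEnt (outer (slater φ))
        (antiClone d hkn (antiPTrace d hkn (outer (slater φ)))) ≤
      Real.log (((d - k).choose (d - n) : ℝ)) ∧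
    Real.log (((d - k).choose (d - n) : ℝ)) =
      -Real.log ((d.choose k : ℝ) / ((n.choose k : ℝ) * (d.choose n : ℝ))) :=
  antisym_cloning_relEnt_bound_general d k n hkn hnd φ hφ
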